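/- arXiv:1812.02085 — 3 statements merged into one kernel-verified Lean document; each statement's English description precedes it below -/
import Mathlib

section
/- The measure μ on the unit disk 𝔻 ⊂ ℂ given by dμ(z) = dA(z)/|1-z| (where dA is planar Lebesgue measure) is a Carleson measure: there exists a constant C > 0 such that for every ε > 0 and every θ ∈ ℝ, μ(S_ε(θ)) ≤ Cε, where S_ε(θ) = {re^{iα} : 1-ε < r < 1, θ-ε < α < θ+ε}. -/
/-!
The Carleson box `S_ε(θ)` lies in the disc of radius `2ε` around `e^{iθ}`, so it suffices to bound
`∫_{B(a, R)} dA(z)/|c - z|` by a multiple of `R`, uniformly in the centres `a`, `c`. In polar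
coordinates around `c` the Jacobian `r` cancels the singularity, giving exactly `2πR` when `a = c`.
If `|a - c| < 2R` the disc `B(a, R)` lies in `B(c, 3R)`; otherwise the integrand is at most `1/R`
on `B(a, R)`, whose area is `πR²`.
-/

open MeasureTheory Metric Set Real

/-- The Carleson box `S_ε(θ) = {re^{iα} : 1-ε < r < 1, θ-ε < α < θ+ε}`. -/
def carlesonBox (ε θ : ℝ) : Set ℂ :=
  {z : ℂ | ∃ r α : ℝ, 1 - ε < r ∧ r < 1 ∧ θ - ε < α ∧ α < θ + ε ∧
    z = (r : ℂ) * Complex.exp (α * Complex.I)}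

lemma setLIntegral_ball_zero_one_div_norm (R : ℝ) :
    ∫⁻ z in ball (0 : ℂ) R, ENNReal.ofReal (1 / ‖z‖) = ENNReal.ofReal (2 * π * R) := by
  have hpolar : ∀ p ∈ polarCoord.target, ENNReal.ofReal p.1 •
      (ball (0 : ℂ) R).indicator (fun z ↦ ENNReal.ofReal (1 / ‖z‖)) (Complex.polarCoord.symm p) =
      (Iio R ×ˢ univ).indicator 1 p := by
    rintro ⟨r, φ⟩ ⟨hr : 0 < r, -⟩
    by_cases hrR : r < R
    · simp [hrR, abs_of_pos hr, ← ENNReal.ofReal_mul hr.le, hr.ne']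
    · simp [hrR, abs_of_pos hr]
  rw [← lintegral_indicator measurableSet_ball, ← Complex.lintegral_comp_polarCoord_symm,
    setLIntegral_congr_fun polarCoord.open_target.measurableSet hpolar,
    lintegral_indicator_one (measurableSet_Iio.prod MeasurableSet.univ),
    Measure.restrict_apply (measurableSet_Iio.prod MeasurableSet.univ), polarCoord_target,
    prod_inter_prod, Measure.volume_eq_prod, Measure.prod_prod, Iio_inter_Ioi, univ_inter,
    Real.volume_Ioo, Real.volume_Ioo, ← ENNReal.ofReal_mul' (by linarith [pi_pos])]
  ring_nf

lemma setLIntegral_ball_one_div_norm_sub (c : ℂ) (R : ℝ) :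
    ∫⁻ z in ball c R, ENNReal.ofReal (1 / ‖c - z‖) = ENNReal.ofReal (2 * π * R) := by
  have htranslate : (ball c R).indicator (fun z ↦ ENNReal.ofReal (1 / ‖c - z‖)) =
      fun z ↦ (ball 0 R).indicator (fun w ↦ ENNReal.ofReal (1 / ‖w‖)) (c - z) := by
    ext z
    simp [indicator, dist_eq_norm, norm_sub_rev]
  rw [← lintegral_indicator measurableSet_ball, htranslate, lintegral_sub_left_eq_self,
    lintegral_indicator measurableSet_ball, setLIntegral_ball_zero_one_div_norm]

lemma setLIntegral_ball_one_div_norm_sub_le (a c : ℂ) {R : ℝ} (hR : 0 < R) :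
    ∫⁻ z in ball a R, ENNReal.ofReal (1 / ‖c - z‖) ≤ ENNReal.ofReal (6 * π * R) := by
  by_cases hnear : dist a c < 2 * R
  · calc ∫⁻ z in ball a R, ENNReal.ofReal (1 / ‖c - z‖)
        ≤ ∫⁻ z in ball c (3 * R), ENNReal.ofReal (1 / ‖c - z‖) :=
          lintegral_mono_set (ball_subset_ball' (by linarith))
      _ = ENNReal.ofReal (6 * π * R) := by
          rw [setLIntegral_ball_one_div_norm_sub]
          ring_nf
  · have hbound : ∀ z ∈ ball a R, ENNReal.ofReal (1 / ‖c - z‖) ≤ ENNReal.ofReal (1 / R) := by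
      intro z hz
      have hfar : R ≤ ‖c - z‖ := by
        rw [mem_ball] at hz
        linarith [dist_triangle a z c, dist_comm a z, dist_eq_norm' z c]
      exact ENNReal.ofReal_le_ofReal (one_div_le_one_div_of_le hR hfar)
    calc ∫⁻ z in ball a R, ENNReal.ofReal (1 / ‖c - z‖)
        ≤ ∫⁻ _ in ball a R, ENNReal.ofReal (1 / R) := setLIntegral_mono measurable_const hbound
      _ = ENNReal.ofReal (π * R) := by
          rw [setLIntegral_const, Complex.volume_ball, ← ENNReal.ofReal_pow hR.le,
            ← ENNReal.ofReal_coe_nnreal, NNReal.coe_real_pi, ← ENNReal.ofReal_mul (by positivity),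
            ← ENNReal.ofReal_mul (by positivity)]
          congr 1
          field_simp
      _ ≤ ENNReal.ofReal (6 * π * R) := ENNReal.ofReal_le_ofReal (by nlinarith [pi_pos])

lemma norm_exp_mul_I_sub_exp_mul_I_le (α θ : ℝ) :
    ‖Complex.exp (α * Complex.I) - Complex.exp (θ * Complex.I)‖ ≤ |α - θ| := by
  have hfactor : Complex.exp (α * Complex.I) - Complex.exp (θ * Complex.I) =
      Complex.exp (θ * Complex.I) * (Complex.exp (Complex.I * (α - θ : ℝ)) - 1) := by
    rw [mul_sub, ← Complex.exp_add]
    push_cast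
    ring_nf
  rw [hfactor, norm_mul, Complex.norm_exp_ofReal_mul_I, one_mul]
  exact Real.norm_exp_I_mul_ofReal_sub_one_le

lemma carlesonBox_subset_ball (ε θ : ℝ) :
    carlesonBox ε θ ⊆ ball (Complex.exp (θ * Complex.I)) (2 * ε) := by
  rintro z ⟨r, α, hr₁, hr₂, hα₁, hα₂, rfl⟩
  have hradial :
      ‖(r : ℂ) * Complex.exp (α * Complex.I) - Complex.exp (α * Complex.I)‖ = |r - 1| := by
    rw [← sub_one_mul, norm_mul, Complex.norm_exp_ofReal_mul_I, mul_one, ← Complex.ofReal_one,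
      ← Complex.ofReal_sub, Complex.norm_real, Real.norm_eq_abs]
  rw [mem_ball, dist_eq_norm]
  calc ‖(r : ℂ) * Complex.exp (α * Complex.I) - Complex.exp (θ * Complex.I)‖
      ≤ |r - 1| + |α - θ| := by
        rw [← hradial]
        exact (norm_sub_le_norm_sub_add_norm_sub _ _ _).trans
          (add_le_add le_rfl (norm_exp_mul_I_sub_exp_mul_I_le α θ))
    _ < 2 * ε := by
        have hr : |r - 1| < ε := abs_lt.mpr ⟨by linarith, by linarith⟩
        have hα : |α - θ| < ε := abs_lt.mpr ⟨by linarith, by linarith⟩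
        linarith

/-- The measure `dμ(z) = dA(z)/|1-z|` on the unit disk is a Carleson measure. -/
theorem carleson_measure_one_over_one_sub_z :
    ∃ C : ℝ, 0 < C ∧ ∀ ε : ℝ, 0 < ε → ∀ θ : ℝ,
      (∫⁻ z in carlesonBox ε θ, ENNReal.ofReal (1 / ‖1 - z‖)) ≤
        ENNReal.ofReal (C * ε) := by
  refine ⟨12 * π, by positivity, fun ε hε θ ↦ ?_⟩
  calc ∫⁻ z in carlesonBox ε θ, ENNReal.ofReal (1 / ‖1 - z‖)
      ≤ ∫⁻ z in ball (Complex.exp (θ * Complex.I)) (2 * ε), ENNReal.ofReal (1 / ‖1 - z‖) :=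
        lintegral_mono_set (carlesonBox_subset_ball ε θ)
    _ ≤ ENNReal.ofReal (6 * π * (2 * ε)) :=
        setLIntegral_ball_one_div_norm_sub_le _ 1 (by positivity)
    _ = ENNReal.ofReal (12 * π * ε) := by ring_nf
end

section
/- For real numbers p and β with 1 < p < 2 and β > 1, the integral over the set S₁ = {1 + re^{iθ} : 0 < r ≤ 3/4, 3π/4 ≤ θ ≤ 5π/4} of the function z ↦ 1/((1-|z|)^{2-p} · |1-z|^p · (log(1/(1-|z|)))^β) with respect to planar Lebesgue measure is finite. -/
/-!
On `S₁` one has `1 - ‖z‖ ≥ ‖1 - z‖ / 4`, so `S₁` lies in a truncated Stolz angle at `1`. There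
`1 - ‖z‖` is comparable to `r = ‖1 - z‖`, so the integrand is at most a constant times
`1 / (r ^ 2 * log (1 / r) ^ β)`. In polar coordinates about `1` this radial majorant
becomes `1 / (r * log (1 / r) ^ β)`, which is integrable near `0` for `β > 1`, with antiderivative
`(-log r) ^ (1 - β) / (β - 1)`.
-/

open MeasureTheory Metric Set Real

/-- The set `S₁ = {1 + re^{iθ} : 0 < r ≤ 3/4, 3π/4 ≤ θ ≤ 5π/4}`. -/
def S1 : Set ℂ :=
  {z : ℂ | ∃ r θ : ℝ, 0 < r ∧ r ≤ 3 / 4 ∧ 3 * π / 4 ≤ θ ∧ θ ≤ 5 * π / 4 ∧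
    z = 1 + (r : ℂ) * Complex.exp (θ * Complex.I)}

open Filter Module Topology

lemma integrableOn_Ioc_one_div_mul_log_rpow {β a : ℝ} (hβ : 1 < β) (ha : a < 1) :
    IntegrableOn (fun r : ℝ => 1 / (r * log (1 / r) ^ β)) (Ioc 0 a) := by
  have hlog : ∀ r ∈ Ioo (0 : ℝ) 1, 0 < -log r := fun r hr => neg_pos.2 (log_neg hr.1 hr.2)
  refine intervalIntegral.integrableOn_deriv_of_nonneg
    (g := fun r => (-log r) ^ (1 - β) / (β - 1)) (fun r hr => ?_) (fun r hr => ?_) (fun r hr => ?_)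
  · rcases hr.1.eq_or_lt with rfl | hr0
    · have hG : Tendsto (fun r => (-log r) ^ (1 - β) / (β - 1)) (𝓝[>] 0) (𝓝 0) := by
        rw [show (1 : ℝ) - β = -(β - 1) by ring]
        simpa only [zero_div, Function.comp_def] using
          ((tendsto_rpow_neg_atTop (y := β - 1) (by linarith)).comp
            (tendsto_neg_atBot_atTop.comp tendsto_log_nhdsGT_zero)).div_const _
      refine (continuousWithinAt_Ioi_iff_Ici.1 ?_).mono Icc_subset_Ici_self
      -- at `0` the junk value `(-log 0) ^ (1 - β) = 0 ^ (1 - β) = 0` is also the limit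
      simpa [ContinuousWithinAt, zero_rpow (by linarith : 1 - β ≠ 0)] using hG
    · have hL := hlog r ⟨hr0, hr.2.trans_lt ha⟩
      exact ((continuousAt_log hr0.ne').neg.rpow_const (Or.inl hL.ne')).div_const _
        |>.continuousWithinAt
  · have hL := hlog r ⟨hr.1, hr.2.trans ha⟩
    refine ((((hasDerivAt_log hr.1.ne').neg).rpow_const (Or.inl hL.ne')).div_const _).congr_deriv ?_
    rw [Pi.neg_apply, one_div r, log_inv, show (1 : ℝ) - β - 1 = -β by ring, rpow_neg hL.le]
    have hβ1 : β - 1 ≠ 0 := by linarith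
    field_simp
    ring
  · have hL := hlog r ⟨hr.1, hr.2.trans ha⟩
    have hr0 := hr.1
    rw [one_div r, log_inv]
    positivity

lemma integrableOn_ball_one_div_norm_pow_finrank_mul_log_rpow {E : Type*} [NormedAddCommGroup E]
    [NormedSpace ℝ E] [MeasurableSpace E] [BorelSpace E] [Nontrivial E] [FiniteDimensional ℝ E]
    (μ : Measure E) [μ.IsAddHaarMeasure] {β R : ℝ} (hβ : 1 < β) (hR : R < 1) :
    IntegrableOn (fun x : E => 1 / (‖x‖ ^ finrank ℝ E * log (1 / ‖x‖) ^ β)) (ball 0 R) μ := by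
  rw [integrableOn_fun_norm_addHaar μ (f := fun r => 1 / (r ^ finrank ℝ E * log (1 / r) ^ β))]
  refine ((integrableOn_Ioc_one_div_mul_log_rpow hβ hR).mono_set Ioo_subset_Ioc_self).congr_fun
    (fun r hr => ?_) measurableSet_Ioo
  have hr : r ≠ 0 := hr.1.ne'
  rw [smul_eq_mul, ← Nat.sub_add_cancel finrank_pos, pow_succ, Nat.add_sub_cancel]
  field_simp

lemma one_div_rpow_mul_rpow_mul_log_rpow_le {M d r p β : ℝ} (hM : 0 < M) (hr : 0 < r)
    (hr1 : r < 1) (hrd : r ≤ M * d) (hdr : d ≤ r) (hp : p ≤ 2) (hβ : 0 ≤ β) :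
    1 / (d ^ (2 - p) * r ^ p * log (1 / d) ^ β) ≤
      M ^ (2 - p) * (1 / (r ^ 2 * log (1 / r) ^ β)) := by
  have hd : r / M ≤ d := by rwa [div_le_iff₀' hM]
  have hd0 : 0 < d := (div_pos hr hM).trans_le hd
  have hL : 0 < log (1 / r) := log_pos (by rw [one_div]; exact one_lt_inv₀ hr |>.2 hr1)
  calc 1 / (d ^ (2 - p) * r ^ p * log (1 / d) ^ β)
      ≤ 1 / ((r / M) ^ (2 - p) * r ^ p * log (1 / r) ^ β) := by
        gcongr
    _ = M ^ (2 - p) * (1 / (r ^ 2 * log (1 / r) ^ β)) := by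
        have hrr : r ^ (2 - p) * r ^ p = r ^ 2 := by rw [← rpow_add hr, sub_add_cancel, rpow_two]
        rw [div_rpow hr.le hM.le, div_mul_eq_mul_div, hrr]
        field_simp

lemma integrableOn_stolzSet_inter_ball {M R p β : ℝ} (hR : R < 1) (hp : p ≤ 2) (hβ : 1 < β) :
    IntegrableOn (fun z : ℂ =>
      1 / ((1 - ‖z‖) ^ (2 - p) * ‖1 - z‖ ^ p * log (1 / (1 - ‖z‖)) ^ β))
      (Complex.stolzSet M ∩ ball 1 R) := by
  have hg := integrableOn_ball_one_div_norm_pow_finrank_mul_log_rpow (E := ℂ) volume hβ hR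
  rw [Complex.finrank_real_complex] at hg
  have hopen : IsOpen (Complex.stolzSet M) :=
    (isOpen_lt continuous_norm continuous_const).inter
      (isOpen_lt (f := fun z : ℂ => ‖1 - z‖) (g := fun z => M * (1 - ‖z‖))
        (by fun_prop) (by fun_prop))
  have hmeas : MeasurableSet (Complex.stolzSet M ∩ ball 1 R) :=
    (hopen.inter isOpen_ball).measurableSet
  refine ((hg.integrable_indicator measurableSet_ball).comp_sub_left 1 |>.const_mul (M ^ (2 - p))
    |>.integrableOn).mono' (by fun_prop : Measurable _).aestronglyMeasurable
    (ae_restrict_of_forall_mem hmeas ?_)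
  rintro z ⟨⟨hz1, hzM⟩, hzR⟩
  have hd : 0 < 1 - ‖z‖ := sub_pos.2 hz1
  have hr : 0 < ‖1 - z‖ := norm_pos_iff.2 (sub_ne_zero.2 fun h => by simp [← h] at hz1)
  have hrR : ‖1 - z‖ < R := by rwa [mem_ball, dist_eq_norm, norm_sub_rev] at hzR
  have hdr : 1 - ‖z‖ ≤ ‖1 - z‖ := by simpa using norm_sub_norm_le (1 : ℂ) z
  have hL : 0 < log (1 / (1 - ‖z‖)) :=
    log_pos (by rw [one_div]; exact (one_lt_inv₀ hd).2 (by linarith))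
  rw [indicator_of_mem (mem_ball_zero_iff.2 hrR), Real.norm_of_nonneg (by positivity)]
  exact one_div_rpow_mul_rpow_mul_log_rpow_le (by nlinarith) hr (hrR.trans hR) hzM.le hdr hp
    (by linarith)

lemma cos_le_neg_sqrt_two_div_two {θ : ℝ} (h1 : 3 * π / 4 ≤ θ) (h2 : θ ≤ 5 * π / 4) :
    cos θ ≤ -(√2 / 2) := by
  have h : cos (π / 4) ≤ cos |θ - π| :=
    cos_le_cos_of_nonneg_of_le_pi (abs_nonneg _) (by linarith [pi_pos])
      (abs_le.2 ⟨by linarith, by linarith⟩)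
  rwa [cos_abs, cos_sub_pi, cos_pi_div_four, le_neg] at h

lemma norm_one_add_mul_exp_le {r θ : ℝ} (hr0 : 0 ≤ r) (hr : r ≤ 3 / 4) (hθ : cos θ ≤ -(√2 / 2)) :
    ‖1 + r * Complex.exp (θ * Complex.I)‖ ≤ 1 - r / 4 := by
  have hsq : ‖1 + r * Complex.exp (θ * Complex.I)‖ ^ 2 = 1 + 2 * r * cos θ + r ^ 2 := by
    rw [Complex.sq_norm, Complex.normSq_apply]
    simp only [Complex.add_re, Complex.add_im, Complex.one_re, Complex.one_im, Complex.mul_re,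
      Complex.mul_im, Complex.ofReal_re, Complex.ofReal_im, Complex.exp_ofReal_mul_I_re,
      Complex.exp_ofReal_mul_I_im]
    linear_combination r ^ 2 * sin_sq_add_cos_sq θ
  have hsqrt : 7 / 5 ≤ √2 := by nlinarith [sq_sqrt (zero_le_two : (0 : ℝ) ≤ 2), sqrt_nonneg 2]
  refine (pow_le_pow_iff_left₀ (norm_nonneg _) (by linarith) two_ne_zero).1 ?_
  nlinarith

lemma S1_subset_stolzSet_inter_ball : S1 ⊆ Complex.stolzSet 5 ∩ ball 1 (4 / 5) := by
  rintro _ ⟨r, θ, hr0, hr, h1, h2, rfl⟩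
  have hnorm := norm_one_add_mul_exp_le hr0.le hr (cos_le_neg_sqrt_two_div_two h1 h2)
  have hdist : ‖1 - (1 + r * Complex.exp (θ * Complex.I))‖ = r := by
    simp [Complex.norm_exp_ofReal_mul_I, abs_of_pos hr0]
  refine ⟨⟨by linarith, by linarith⟩, ?_⟩
  rw [mem_ball, dist_eq_norm, norm_sub_rev, hdist]
  linarith

theorem integrable_on_S1_general (p β : ℝ) (hp2 : p < 2) (hβ : 1 < β) :
    IntegrableOn (fun z : ℂ =>
      1 / ((1 - ‖z‖) ^ (2 - p) * ‖1 - z‖ ^ p *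
        (Real.log (1 / (1 - ‖z‖))) ^ β)) S1 volume :=
  (integrableOn_stolzSet_inter_ball (by norm_num) hp2.le hβ).mono_set S1_subset_stolzSet_inter_ball

theorem integrable_on_S1 (p β : ℝ) (hp1 : 1 < p) (hp2 : p < 2) (hβ : 1 < β) :
    IntegrableOn (fun z : ℂ =>
      1 / ((1 - ‖z‖) ^ (2 - p) * ‖1 - z‖ ^ p *
        (Real.log (1 / (1 - ‖z‖))) ^ β)) S1 volume :=
  integrable_on_S1_general p β hp2 hβ
end

section
/- Let p ∈ (1,2), s ∈ (0,1) with p - 1 < s, and set β = (2-p)/(1-s), so β > 1. Then the integral over the region S₂ = {(x,y) ∈ 𝔻 : -1/√2 ≤ y ≤ 1/√2, x ≤ 1, x ≥ 1 - |y|} of the function z ↦ 1/((1-|z|)^{2-p} |1-z|^p (log(1/(1-|z|)))^β) with respect to planar Lebesgue measure is finite. -/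
open MeasureTheory Metric Set Real

/-- The set `S₂ = {(x,y) ∈ 𝔻 : -1/√2 ≤ y ≤ 1/√2, x ≤ 1, x ≥ 1 - |y|}`. -/
def S2 : Set ℂ :=
  {z : ℂ | ‖z‖ < 1 ∧ -(1 / Real.sqrt 2) ≤ z.im ∧ z.im ≤ 1 / Real.sqrt 2 ∧
    z.re ≤ 1 ∧ 1 - |z.im| ≤ z.re}

/-!
Write `z = x + iy` and `a(y) = √(1 - y²)`, so that `(a(y), y)` lies on the unit circle. On `S₂`
we have `x ≥ 1 - |y|`, hence `1 - |z| ≤ |y|`, `|1 - z| ≥ |y|` and `log (1/(1-|z|)) ≥ log (1/|y|)`,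
while `1 - |z| ≥ (1 - |z|²)/2 = (a + x)(a - x)/2 ≥ c (a - x)` with `c = (1 - 1/√2)/2`. So the
integrand is at most `c^(p-2) (a(y) - x)^(p-2) |y|^(-p) (log (1/|y|))^(-β)` on the band
`a(y) - |y| ≤ x ≤ a(y)`. By Fubini, integrating first in `x` produces `|y|^(p-1)/(p-1)`, and what
is left is `∫ dy / (|y| (log (1/|y|))^β)` near `0`, which is finite because `β > 1`.
-/

open Filter Topology

theorem intervalIntegrable_inv_mul_neg_log_rpow {β b : ℝ} (hβ : 1 < β) (hb0 : 0 ≤ b)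
    (hb : b < 1) : IntervalIntegrable (fun y => y⁻¹ * (-log y) ^ (-β)) volume 0 b := by
  set g : ℝ → ℝ := fun y => (-log y) ^ (1 - β) / (β - 1)
  have hlog_pos : ∀ y ∈ Ioc 0 b, 0 < -log y := fun y hy =>
    neg_pos.2 (log_neg hy.1 (hy.2.trans_lt hb))
  have hg_zero : Tendsto g (𝓝[>] 0) (𝓝 (g 0)) := by
    have h := ((tendsto_rpow_neg_atTop (by linarith : 0 < β - 1)).comp
      (tendsto_neg_atBot_atTop.comp tendsto_log_nhdsGT_zero)).div_const (β - 1)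
    simpa [g, zero_rpow (by linarith : 1 - β ≠ 0)] using h
  have hg_cont : ContinuousOn g (Icc 0 b) := by
    intro y hy
    rcases hy.1.eq_or_lt with rfl | hy0
    · exact (continuousWithinAt_Ioi_iff_Ici.1 hg_zero).mono Icc_subset_Ici_self
    · exact ((((continuousAt_log hy0.ne').neg).rpow_const
        (Or.inl (hlog_pos y ⟨hy0, hy.2⟩).ne')).div_const _).continuousWithinAt
  have hg_deriv : ∀ y ∈ Ioo 0 b, HasDerivAt g (y⁻¹ * (-log y) ^ (-β)) y := by
    intro y hy
    refine (((hasDerivAt_log hy.1.ne').neg.rpow_const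
      (Or.inl (hlog_pos y (Ioo_subset_Ioc_self hy)).ne')).div_const (β - 1)).congr_deriv ?_
    rw [show 1 - β - 1 = -β by ring]
    field_simp [(by linarith : β - 1 ≠ 0)]
    simp only [Pi.neg_apply]
    ring
  rw [intervalIntegrable_iff_integrableOn_Ioc_of_le hb0]
  exact intervalIntegral.integrableOn_deriv_of_nonneg hg_cont hg_deriv fun y hy =>
    mul_nonneg (inv_nonneg.2 hy.1.le) (rpow_nonneg (hlog_pos y (Ioo_subset_Ioc_self hy)).le _)

theorem IntervalIntegrable.comp_abs {E : Type*} [NormedAddCommGroup E] {f : ℝ → E} {b : ℝ}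
    (hb : 0 ≤ b) (hf : IntervalIntegrable f volume 0 b) :
    IntervalIntegrable (fun y => f |y|) volume (-b) b := by
  have hpos : IntervalIntegrable (fun y => f |y|) volume 0 b := by
    refine hf.congr fun y hy => ?_
    rw [uIoc_of_le hb] at hy
    rw [abs_of_pos hy.1]
  refine IntervalIntegrable.trans (b := 0) ?_ hpos
  rw [IntervalIntegrable.iff_comp_neg]
  simpa using hpos.symm

theorem integrableOn_Icc_sub_rpow {r : ℝ} (hr : -1 < r) (a t : ℝ) :
    IntegrableOn (fun x => (a - x) ^ r) (Icc (a - t) a) := by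
  rcases le_or_gt 0 t with ht | ht
  · rw [integrableOn_Icc_iff_integrableOn_Ioc,
      ← intervalIntegrable_iff_integrableOn_Ioc_of_le (by linarith)]
    simpa using ((intervalIntegral.intervalIntegrable_rpow' hr (a := 0) (b := t)).comp_sub_left
      a).symm
  · rw [Icc_eq_empty (by linarith)]
    exact integrableOn_empty

theorem integral_Icc_sub_rpow {r : ℝ} (hr : -1 < r) (a : ℝ) {t : ℝ} (ht : 0 ≤ t) :
    ∫ x in Icc (a - t) a, (a - x) ^ r = t ^ (r + 1) / (r + 1) := by
  rw [integral_Icc_eq_integral_Ioc, ← intervalIntegral.integral_of_le (by linarith),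
    intervalIntegral.integral_comp_sub_left (fun u => u ^ r) a, sub_self, sub_sub_cancel,
    integral_rpow (Or.inl hr), zero_rpow (by linarith : r + 1 ≠ 0), sub_zero]

theorem integrable_prod_of_nonneg_of_integral_le {α β : Type*} [MeasurableSpace α]
    [MeasurableSpace β] {μ : Measure α} {ν : Measure β} [SFinite μ] [SFinite ν]
    {f : α × β → ℝ} {G : β → ℝ} (hf : AEStronglyMeasurable f (μ.prod ν)) (hf0 : 0 ≤ f)
    (hsec : ∀ᵐ y ∂ν, Integrable (fun x => f (x, y)) μ)
    (hle : ∀ᵐ y ∂ν, ∫ x, f (x, y) ∂μ ≤ G y) (hG : Integrable G ν) :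
    Integrable f (μ.prod ν) := by
  refine (integrable_prod_iff' hf).2 ⟨hsec, hG.mono' hf.norm.prod_swap.integral_prod_right' ?_⟩
  filter_upwards [hle] with y hy
  simp only [Real.norm_of_nonneg (hf0 _)]
  rwa [Real.norm_of_nonneg (integral_nonneg fun x => hf0 (x, y))]

/-- The band has width `|y|` so that, whatever the curve `a`, the `x`-integral of
`(a(y) - x)^(p-2)` over it is `|y|^(p-1)/(p-1)`, cancelling all but one power of `|y|`. -/
noncomputable def bandMajorant (a : ℝ → ℝ) (b p β : ℝ) (q : ℝ × ℝ) : ℝ :=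
  (Icc (-b) b).indicator (fun y => |y| ^ (-p) * (-log |y|) ^ (-β)) q.2 *
    (Icc (a q.2 - |q.2|) (a q.2)).indicator (fun x => (a q.2 - x) ^ (p - 2)) q.1

theorem measurable_bandMajorant {a : ℝ → ℝ} (ha : Measurable a) (b p β : ℝ) :
    Measurable (bandMajorant a b p β) := by
  refine Measurable.mul ?_ ?_
  · exact (Measurable.indicator (by fun_prop) measurableSet_Icc).comp measurable_snd
  · simp only [indicator_apply, mem_Icc]
    refine Measurable.ite ?_ (by fun_prop) measurable_const
    exact (measurableSet_le (f := fun q : ℝ × ℝ => a q.2 - |q.2|) (by fun_prop)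
      measurable_fst).inter (measurableSet_le measurable_fst (ha.comp measurable_snd))

theorem bandMajorant_nonneg (a : ℝ → ℝ) {b : ℝ} (hb : b ≤ 1) (p β : ℝ) :
    0 ≤ bandMajorant a b p β := by
  intro q
  refine mul_nonneg (indicator_nonneg (fun y hy => ?_) _) (indicator_nonneg (fun x hx => ?_) _)
  · have hlog : 0 ≤ -log |y| := neg_nonneg.2 (log_nonpos (abs_nonneg y) ((abs_le.2 hy).trans hb))
    positivity
  · exact rpow_nonneg (sub_nonneg.2 hx.2) _

theorem integrable_bandMajorant {a : ℝ → ℝ} (ha : Measurable a) {b : ℝ} (hb0 : 0 ≤ b)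
    (hb1 : b < 1) {p β : ℝ} (hp : 1 < p) (hβ : 1 < β) :
    Integrable (bandMajorant a b p β) := by
  rw [Measure.volume_eq_prod]
  refine integrable_prod_of_nonneg_of_integral_le
    (G := fun y => (Icc (-b) b).indicator (fun y => |y|⁻¹ * (-log |y|) ^ (-β)) y / (p - 1))
    (measurable_bandMajorant ha b p β).aestronglyMeasurable (bandMajorant_nonneg a hb1.le p β)
    (ae_of_all _ fun y => ?_) (ae_of_all _ fun y => le_of_eq ?_) ?_
  · simp only [bandMajorant]
    exact ((integrable_indicator_iff measurableSet_Icc).2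
      (integrableOn_Icc_sub_rpow (r := p - 2) (by linarith) (a y) |y|)).const_mul _
  · simp only [bandMajorant]
    rw [integral_const_mul, integral_indicator measurableSet_Icc,
      integral_Icc_sub_rpow (by linarith) (a y) (abs_nonneg y), show p - 2 + 1 = p - 1 by ring]
    by_cases hy : y ∈ Icc (-b) b
    · have hpow : |y| ^ (-p) * |y| ^ (p - 1) = |y|⁻¹ := by
        rw [← rpow_add' (abs_nonneg y) (by ring_nf; norm_num), ← rpow_neg_one]
        ring_nf
      rw [indicator_of_mem hy, indicator_of_mem hy, ← hpow]
      ring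
    · simp [indicator_of_notMem hy]
  · refine Integrable.div_const ?_ _
    rw [integrable_indicator_iff measurableSet_Icc,
      ← intervalIntegrable_iff_integrableOn_Icc_of_le (by linarith)]
    exact (intervalIntegrable_inv_mul_neg_log_rpow hβ hb0 hb1).comp_abs hb0

theorem one_div_rpow_mul_rpow_mul_rpow_le {p β A B L A' B' L' : ℝ} (hp0 : 0 ≤ p) (hp2 : p ≤ 2)
    (hβ : 0 ≤ β) (hA' : 0 < A') (hA : A' ≤ A) (hB' : 0 < B') (hB : B' ≤ B) (hL' : 0 < L')
    (hL : L' ≤ L) :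
    1 / (A ^ (2 - p) * B ^ p * L ^ β) ≤ A' ^ (p - 2) * B' ^ (-p) * L' ^ (-β) := by
  have hA0 : 0 < A := hA'.trans_le hA
  have hB0 : 0 < B := hB'.trans_le hB
  have hL0 : 0 < L := hL'.trans_le hL
  rw [one_div, mul_inv, mul_inv, ← rpow_neg hA0.le, ← rpow_neg hB0.le, ← rpow_neg hL0.le, neg_sub]
  gcongr ?_ * ?_ * ?_
  · exact rpow_le_rpow_of_nonpos hA' hA (by linarith)
  · exact rpow_le_rpow_of_nonpos hB' hB (by linarith)
  · exact rpow_le_rpow_of_nonpos hL' hL (by linarith)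

theorem Complex.re_lt_sqrt_one_sub_im_sq {z : ℂ} (hz : ‖z‖ < 1) : z.re < √(1 - z.im ^ 2) := by
  refine lt_sqrt_of_sq_lt ?_
  have h := Complex.sq_norm z
  rw [Complex.normSq_apply] at h
  nlinarith [norm_nonneg z]

theorem Complex.mul_sqrt_one_sub_im_sq_sub_re_le {z : ℂ} (hz : ‖z‖ ≤ 1) {m : ℝ}
    (hm : m ≤ z.re) : m * (√(1 - z.im ^ 2) - z.re) ≤ 2 * (1 - ‖z‖) := by
  have hsq : ‖z‖ ^ 2 = z.re ^ 2 + z.im ^ 2 := by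
    rw [Complex.sq_norm, Complex.normSq_apply]; ring
  have him : z.im ^ 2 ≤ 1 := by nlinarith [norm_nonneg z, sq_nonneg z.re]
  have hre : z.re ≤ √(1 - z.im ^ 2) :=
    (le_abs_self _).trans (abs_le_sqrt (by nlinarith [norm_nonneg z]))
  have ha : √(1 - z.im ^ 2) ^ 2 = 1 - z.im ^ 2 := sq_sqrt (by linarith)
  calc m * (√(1 - z.im ^ 2) - z.re)
      ≤ (√(1 - z.im ^ 2) + z.re) * (√(1 - z.im ^ 2) - z.re) := by
        gcongr
        linarith [sqrt_nonneg (1 - z.im ^ 2)]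
    _ = 1 - ‖z‖ ^ 2 := by nlinarith
    _ ≤ 2 * (1 - ‖z‖) := by nlinarith [sq_nonneg (1 - ‖z‖)]

theorem one_div_sqrt_two_lt_one : 1 / √2 < 1 := by
  rw [div_lt_one (by positivity)]
  exact one_lt_sqrt_two

theorem measurableSet_S2 : MeasurableSet S2 := by
  unfold S2
  measurability

noncomputable def boundaryKernel (p β : ℝ) (z : ℂ) : ℝ :=
  1 / ((1 - ‖z‖) ^ (2 - p) * ‖1 - z‖ ^ p * (Real.log (1 / (1 - ‖z‖))) ^ β)

theorem norm_boundaryKernel_le {p β : ℝ} (hp0 : 0 ≤ p) (hp2 : p ≤ 2) (hβ : 0 ≤ β) {z : ℂ}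
    (hz : z ∈ S2) :
    ‖boundaryKernel p β z‖ ≤ ((1 - 1 / √2) / 2) ^ (p - 2) *
      bandMajorant (fun y => √(1 - y ^ 2)) (1 / √2) p β (z.re, z.im) := by
  obtain ⟨hz1, hy_lo, hy_hi, -, hx⟩ := hz
  set a := √(1 - z.im ^ 2)
  set c := (1 - 1 / √2) / 2
  have hb1 := one_div_sqrt_two_lt_one
  have hc : 0 < c := by simp only [c]; linarith
  have hyb : |z.im| ≤ 1 / √2 := abs_le.2 ⟨hy_lo, hy_hi⟩
  have hxr : z.re ≤ ‖z‖ := Complex.re_le_norm z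
  have hy0 : 0 < |z.im| := by linarith
  have hxa : z.re < a := Complex.re_lt_sqrt_one_sub_im_sq hz1
  have ha1 : a ≤ 1 := sqrt_le_one.2 (by linarith [sq_nonneg z.im])
  have hmaj : bandMajorant (fun y => √(1 - y ^ 2)) (1 / √2) p β (z.re, z.im) =
      |z.im| ^ (-p) * (-log |z.im|) ^ (-β) * (a - z.re) ^ (p - 2) := by
    simp only [bandMajorant]
    rw [indicator_of_mem (show z.im ∈ Icc (-(1 / √2)) (1 / √2) from abs_le.1 hyb),
      indicator_of_mem (show z.re ∈ Icc (a - |z.im|) a from ⟨by linarith, hxa.le⟩)]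
  have hA : c * (a - z.re) ≤ 1 - ‖z‖ := by
    have := Complex.mul_sqrt_one_sub_im_sq_sub_re_le hz1.le (m := 1 - 1 / √2) (by linarith)
    simp only [c]
    linarith
  have hB : |z.im| ≤ ‖1 - z‖ := by simpa using Complex.abs_im_le_norm (1 - z)
  have hL : -log |z.im| ≤ log (1 / (1 - ‖z‖)) := by
    rw [one_div, log_inv, neg_le_neg_iff]
    exact log_le_log (by linarith) (by linarith)
  have hL' : 0 < -log |z.im| := neg_pos.2 (log_neg hy0 (by linarith))
  have hK := one_div_rpow_mul_rpow_mul_rpow_le hp0 hp2 hβ (mul_pos hc (sub_pos.2 hxa)) hA hy0 hB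
    hL' hL
  have hL0 : 0 < log (1 / (1 - ‖z‖)) := hL'.trans_le hL
  have hA0 : 0 < 1 - ‖z‖ := by linarith
  rw [Real.norm_of_nonneg (by unfold boundaryKernel; positivity), hmaj]
  refine hK.trans_eq ?_
  rw [mul_rpow hc.le (sub_nonneg.2 hxa.le)]
  ring

theorem integrable_on_S2_general (p s : ℝ) (hp1 : 1 < p) (hp2 : p < 2)
    (hs1 : s < 1) (hps : p - 1 < s)
    (β : ℝ) (hβ : β = (2 - p) / (1 - s)) :
    IntegrableOn (fun z : ℂ =>
      1 / ((1 - ‖z‖) ^ (2 - p) * ‖1 - z‖ ^ p *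
        (Real.log (1 / (1 - ‖z‖))) ^ β)) S2 volume := by
  have hβ1 : 1 < β := by
    rw [hβ, one_lt_div (by linarith)]
    linarith
  have hmaj : Integrable (fun z : ℂ =>
      bandMajorant (fun y => √(1 - y ^ 2)) (1 / √2) p β (z.re, z.im)) :=
    (Complex.volume_preserving_equiv_real_prod.integrable_comp_emb
      Complex.measurableEquivRealProd.measurableEmbedding).2
      (integrable_bandMajorant (by fun_prop) (by positivity) one_div_sqrt_two_lt_one hp1 hβ1)
  have hmeas : Measurable (boundaryKernel p β) := by
    unfold boundaryKernel
    fun_prop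
  exact (hmaj.const_mul _).integrableOn.mono' hmeas.aestronglyMeasurable
    (ae_restrict_of_forall_mem measurableSet_S2 fun z hz =>
      norm_boundaryKernel_le (by linarith) hp2.le (by linarith) hz)

theorem integrable_on_S2 (p s : ℝ) (hp1 : 1 < p) (hp2 : p < 2)
    (hs0 : 0 < s) (hs1 : s < 1) (hps : p - 1 < s)
    (β : ℝ) (hβ : β = (2 - p) / (1 - s)) :
    IntegrableOn (fun z : ℂ =>
      1 / ((1 - ‖z‖) ^ (2 - p) * ‖1 - z‖ ^ p *
        (Real.log (1 / (1 - ‖z‖))) ^ β)) S2 volume :=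
  integrable_on_S2_general p s hp1 hp2 hs1 hps β hβ
end
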